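/- arXiv:2106.11387 — 6 statements merged into one kernel-verified Lean document; each statement's English description precedes it below -/
import Mathlib

section
/- Let there be finitely many balls with colors in [c], with n_1 ≥ n_2 ≥ ... ≥ n_c balls of each color. If n_1 ≤ n_2 + n_3 + ... + n_c, then the balls can be arranged in a cyclic sequence such that no two adjacent balls (including the pair closing the cycle) have the same color. -/
/-!
Write the balls in a row sorted by colour, largest class first, and lay the first `⌈N/2⌉`
balls of the row on the even positions of the cycle and the others on the odd positions.
Cyclic neighbours then sit `⌈N/2⌉` or `⌈N/2⌉ - 1` apart in the row, except for the closing
pair, which consists of ball `0` and a ball of index at least `n₁`. Every colour class is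
an interval of the row of length at most `n₁ ≤ N/2`, and every class but the first starts at
index `n₁` or later; this rules out a repeated colour at each of these distances.
-/

open Finset

def riffle (N p : ℕ) : ℕ := if p % 2 = 0 then p / 2 else (N + 1) / 2 + p / 2

lemma riffle_lt {N p : ℕ} (hp : p < N) : riffle N p < N := by
  unfold riffle
  split_ifs <;> omega

def riffleFin (N : ℕ) (p : Fin N) : Fin N := ⟨riffle N p, riffle_lt p.2⟩

lemma riffleFin_bijective (N : ℕ) : (riffleFin N).Bijective := by
  refine Finite.injective_iff_bijective.mp fun p q h => Fin.ext ?_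
  have := p.2
  have := q.2
  simp only [riffleFin, riffle, Fin.mk.injEq] at h
  split_ifs at h <;> omega

lemma val_finRotate {N : ℕ} (k : Fin N) :
    (finRotate N k : ℕ) = if (k : ℕ) + 1 = N then 0 else (k : ℕ) + 1 := by
  obtain _ | N := N
  · exact k.elim0
  · rw [coe_finRotate]
    simp [Fin.ext_iff]

def HasNarrowClasses {α : Type*} {N : ℕ} (w : Fin N → α) (m : ℕ) : Prop :=
  ∀ a b, w a = w b → (a : ℕ) < b + m ∧ ((a : ℕ) < m → (b : ℕ) < m)

theorem HasNarrowClasses.riffleFin_ne_finRotate {α : Type*} {N m : ℕ} {w : Fin N → α}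
    (hw : HasNarrowClasses w m) (hm : 2 * m ≤ N) (k : Fin N) :
    w (riffleFin N k) ≠ w (riffleFin N (finRotate N k)) := by
  intro h
  obtain ⟨h₁, h₂⟩ := hw _ _ h
  obtain ⟨h₃, h₄⟩ := hw _ _ h.symm
  have := k.2
  simp only [riffleFin, riffle, val_finRotate] at h₁ h₂ h₃ h₄
  split_ifs at h₁ h₂ h₃ h₄ <;> omega

section SortedRow

variable {c : ℕ}

def sortedColor (n : Fin c → ℕ) (b : Fin (∑ i, n i)) : Fin c := (finSigmaFinEquiv.symm b).1

def colorOffset (n : Fin c → ℕ) (i : Fin c) : ℕ := ∑ k : Fin i, n (Fin.castLE i.2.le k)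

lemma card_filter_sortedColor (n : Fin c → ℕ) (i : Fin c) :
    #{b | sortedColor n b = i} = n i := by
  rw [← Fintype.card_subtype, ← Fintype.card_fin (n i)]
  exact Fintype.card_congr ((finSigmaFinEquiv.symm.subtypeEquiv fun _ => Iff.rfl).trans
    (Equiv.sigmaSubtype i))

lemma sortedColor_mem_block (n : Fin c → ℕ) (b : Fin (∑ i, n i)) :
    colorOffset n (sortedColor n b) ≤ b ∧
      (b : ℕ) < colorOffset n (sortedColor n b) + n (sortedColor n b) := by
  have h := finSigmaFinEquiv_apply (finSigmaFinEquiv.symm b)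
  rw [Equiv.apply_symm_apply] at h
  change (b : ℕ) = colorOffset n (sortedColor n b) + _ at h
  have : _ < n (sortedColor n b) := (finSigmaFinEquiv.symm b).2.2
  omega

lemma colorOffset_zero (n : Fin c → ℕ) (hc : 0 < c) : colorOffset n ⟨0, hc⟩ = 0 := by
  simp [colorOffset]

lemma le_colorOffset_of_ne_zero (n : Fin c → ℕ) {i : Fin c} (hi : (i : ℕ) ≠ 0) :
    n ⟨0, by omega⟩ ≤ colorOffset n i := by
  have := single_le_sum (f := fun k : Fin i => n (Fin.castLE i.2.le k))
    (fun _ _ => Nat.zero_le _) (mem_univ ⟨0, by omega⟩)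
  unfold colorOffset
  simpa using this

theorem hasNarrowClasses_sortedColor {n : Fin c → ℕ} (hc : 0 < c) (hmono : Antitone n) :
    HasNarrowClasses (sortedColor n) (n ⟨0, hc⟩) := by
  intro a b h
  obtain ⟨ha₁, ha₂⟩ := sortedColor_mem_block n a
  obtain ⟨hb₁, hb₂⟩ := sortedColor_mem_block n b
  rw [h] at ha₁ ha₂
  have hle : n (sortedColor n b) ≤ n ⟨0, hc⟩ := hmono (Nat.zero_le _)
  by_cases h₀ : (sortedColor n b : ℕ) = 0
  · rw [show sortedColor n b = ⟨0, hc⟩ from Fin.ext h₀, colorOffset_zero] at hb₂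
    omega
  · have := le_colorOffset_of_ne_zero n h₀
    omega

end SortedRow

/-- Balls with colors in `Fin c`, `n i` balls of color `i`, sizes nonincreasing.
If the largest color class is at most the sum of the others, the balls can be
arranged in a cyclic sequence with no two adjacent balls of the same color. -/
theorem cyclic_rainbow_arrangement (c : ℕ) (hc : 0 < c) (n : Fin c → ℕ)
    (hmono : Antitone n)
    (hsum : n ⟨0, hc⟩ ≤ ∑ j ∈ Finset.univ.erase ⟨0, hc⟩, n j) :
    ∃ f : Fin (∑ i, n i) → Fin c,
      (∀ i : Fin c, (Finset.univ.filter (fun k => f k = i)).card = n i) ∧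
      (∀ k : Fin (∑ i, n i), f k ≠ f (finRotate _ k)) := by
  have htwice : 2 * n ⟨0, hc⟩ ≤ ∑ i, n i := by
    rw [← add_sum_erase _ n (mem_univ ⟨0, hc⟩)]
    omega
  refine ⟨sortedColor n ∘ riffleFin _, fun i => ?_,
    (hasNarrowClasses_sortedColor hc hmono).riffleFin_ne_finRotate htwice⟩
  rw [← card_filter_sortedColor n i]
  exact card_bijective _ (riffleFin_bijective _) fun k => by simp
end

section
/- Under the hypotheses of the cyclic-arrangement lemma (n_1 ≤ n_2 + ... + n_c with n_1 ≥ ... ≥ n_c), for any designated ball b, there exists a linear ordering of all balls starting with b in which no two consecutive balls have the same color. -/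
/-!
Greedy construction. A multiset `s` of colors can be listed starting with `b`, without two equal
neighbours, as soon as `2 * count b s ≤ card s + 1` and `2 * count i s ≤ card s` for `i ≠ b`.
After placing `b`, continue with the most frequent color `q ≠ b` among the remaining balls
`s' = s.erase b`: then `b` drops to at most half of `s'`, and every other color `i` satisfies
`2 * count i s' ≤ count i s' + count q s' ≤ card s'`, so the same conditions hold for `s'`
and `q`. The hypothesis on the largest color class gives these conditions for all balls.
-/

open Finset

namespace Multiset

variable {ι : Type*} [DecidableEq ι]

theorem count_add_count_le_card {a b : ι} (hab : a ≠ b) (s : Multiset ι) :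
    count a s + count b s ≤ card s :=
  calc count a s + count b s = ∑ x ∈ {a, b}, count x s :=
        (Finset.sum_pair (f := (count · s)) hab).symm
    _ ≤ ∑ x ∈ {a, b} ∪ s.toFinset, count x s := sum_le_sum_of_subset subset_union_left
    _ = card s := sum_count_eq_card fun x hx => by simp [hx]

theorem exists_cons_isChain_ne {s : Multiset ι} {b : ι} (hb : b ∈ s)
    (hbs : 2 * count b s ≤ card s + 1) (hs : ∀ i ≠ b, 2 * count i s ≤ card s) :
    ∃ t : List ι, ((b :: t : List ι) : Multiset ι) = s ∧ (b :: t).IsChain (· ≠ ·) := by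
  induction s using strongInductionOn generalizing b with
  | ih s ih =>
  have hcard := card_erase_add_one hb
  have hcount : count b (s.erase b) + 1 = count b s := by
    rw [count_erase_self]; have := count_pos.mpr hb; omega
  by_cases hrest : s.erase b = 0
  · exact ⟨[], by rw [← cons_erase hb, hrest]; rfl, List.isChain_singleton b⟩
  obtain ⟨q₀, hq₀, hq₀b⟩ : ∃ q ∈ s.erase b, q ≠ b := by
    by_contra! h
    have := count_eq_card.mpr fun x hx => (h x hx).symm
    have := card_pos.mpr hrest
    omega
  obtain ⟨q, hq, hqmax⟩ := (s.toFinset.erase b).exists_max_image (count · s)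
    ⟨q₀, by simp [hq₀b, mem_of_mem_erase hq₀]⟩
  obtain ⟨hqb, hq⟩ : q ≠ b ∧ q ∈ s := by simpa using hq
  have hle : ∀ i ≠ b, count i (s.erase b) ≤ count q (s.erase b) := by
    intro i hib
    rw [count_erase_of_ne hib, count_erase_of_ne hqb]
    by_cases hi : i ∈ s
    · exact hqmax i (by simp [hi, hib])
    · rw [count_eq_zero.mpr hi]; exact Nat.zero_le _
  obtain ⟨t, hts, hchain⟩ := ih (s.erase b) (erase_lt.mpr hb) ((mem_erase_of_ne hqb).mpr hq)
    (by rw [count_erase_of_ne hqb]; have := hs q hqb; omega)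
    (by
      intro i hiq
      rcases eq_or_ne i b with rfl | hib
      · omega
      · have := count_add_count_le_card hiq (s.erase b)
        have := hle i hib
        omega)
  refine ⟨q :: t, ?_, List.isChain_cons_cons.mpr ⟨hqb.symm, hchain⟩⟩
  rw [← cons_erase hb, ← hts]
  rfl

end Multiset

theorem List.card_filter_get_eq_count {ι : Type*} [DecidableEq ι] (l : List ι) (i : ι) :
    #{k | l.get k = i} = l.count i := by
  conv_rhs => rw [← List.ofFn_get l, ← Multiset.coe_count, ← Fin.univ_val_map,
    Multiset.count_map]
  simp only [card_def, filter_val, eq_comm]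

theorem two_mul_le_sum_of_le_sum_erase {ι : Type*} [Fintype ι] [DecidableEq ι] {n : ι → ℕ}
    {a : ι} (hmax : ∀ i, n i ≤ n a) (ha : n a ≤ ∑ j ∈ univ.erase a, n j) (i : ι) :
    2 * n i ≤ ∑ j, n j := by
  rw [← add_sum_erase _ _ (mem_univ a)]
  rcases eq_or_ne i a with rfl | hia
  · omega
  · have := single_le_sum (fun j _ => Nat.zero_le (n j)) (mem_erase.mpr ⟨hia, mem_univ i⟩)
    have := hmax i
    omega

/-- Under the hypotheses of the cyclic-arrangement lemma, for any designated
ball (of a color `b` with at least one ball) there is a linear ordering of all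
balls starting with that ball in which no two consecutive balls share a color. -/
theorem linear_rainbow_arrangement (c : ℕ) (hc : 0 < c) (n : Fin c → ℕ)
    (hmono : Antitone n)
    (hsum : n ⟨0, hc⟩ ≤ ∑ j ∈ Finset.univ.erase ⟨0, hc⟩, n j)
    (b : Fin c) (hb : 1 ≤ n b) :
    ∃ f : Fin (∑ i, n i) → Fin c,
      (∀ i : Fin c, (Finset.univ.filter (fun k => f k = i)).card = n i) ∧
      (∀ h0 : 0 < ∑ i, n i, f ⟨0, h0⟩ = b) ∧
      (∀ k : ℕ, ∀ hk : k + 1 < ∑ i, n i,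
        f ⟨k, Nat.lt_of_succ_lt hk⟩ ≠ f ⟨k + 1, hk⟩) := by
  set s : Multiset (Fin c) := ∑ i, n i • {i}
  have hcount : ∀ i, s.count i = n i := by
    simp [s, Multiset.count_sum', Multiset.count_singleton]
  have hcard : Multiset.card s = ∑ i, n i := by simp [s]
  have hhalf := two_mul_le_sum_of_le_sum_erase (n := n)
    (fun i : Fin c => hmono (Nat.zero_le i.val)) hsum
  obtain ⟨t, hts, hchain⟩ := Multiset.exists_cons_isChain_ne (s := s) (b := b)
    (by rw [← Multiset.count_pos, hcount]; omega)
    (by rw [hcount, hcard]; linarith [hhalf b])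
    (fun i _ => by rw [hcount, hcard]; exact hhalf i)
  have hlen : (b :: t).length = ∑ i, n i := by rw [← hcard, ← hts, Multiset.coe_card]
  generalize ∑ i, n i = N at hlen ⊢
  subst hlen
  refine ⟨(b :: t).get, fun i => ?_, fun _ => rfl,
    fun k hk => List.isChain_iff_getElem.mp hchain k hk⟩
  rw [List.card_filter_get_eq_count, ← Multiset.coe_count, hts, hcount]
end

section
/- Construct a multiset from c color classes of sizes n_1 ≥ n_2 ≥ ... ≥ n_c with total N, and place balls onto n_1 stacks by repeatedly cycling through the stacks in order, going through colors from most prevalent to least prevalent. Then no stack contains two balls of the same color. -/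
theorem Nat.add_mod_injOn_Iio (s m : ℕ) : Set.InjOn (fun j => (s + j) % m) (Set.Iio m) :=
  fun _ ha _ hb h => Nat.ModEq.eq_of_lt_of_lt (Nat.ModEq.add_left_cancel' s h) ha hb

/-- Place balls from `c` color classes of nonincreasing sizes `n 0 ≥ n 1 ≥ …`
onto `n 0` stacks by cycling through the stacks, processing colors from most
prevalent to least prevalent: the `j`-th ball of color `i` (in this global
order, its global index being `(∑ j' < i, n j') + j`) lands on stack
`global index mod n 0`. Then no stack receives two balls of the same color. -/
theorem stacks_no_repeated_color (c : ℕ) (hc : 0 < c) (n : Fin c → ℕ)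
    (hmono : Antitone n) :
    ∀ i : Fin c, ∀ j₁ j₂ : ℕ, j₁ < n i → j₂ < n i → j₁ ≠ j₂ →
      ((∑ j' ∈ Finset.univ.filter (fun j' => j' < i), n j') + j₁) % n ⟨0, hc⟩ ≠
      ((∑ j' ∈ Finset.univ.filter (fun j' => j' < i), n j') + j₂) % n ⟨0, hc⟩ := by
  intro i j₁ j₂ h₁ h₂ hne hsame
  have hfirst_largest : n i ≤ n ⟨0, hc⟩ := hmono (Nat.zero_le i.val)
  exact hne <|
    Nat.add_mod_injOn_Iio _ _ (h₁.trans_le hfirst_largest) (h₂.trans_le hfirst_largest) hsame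
end

section
/- Let X be a binomial random variable with m trials and success probability p. Then P(X ≤ ⌊E[X]⌋ ) ≥ 1/2 fails in general, but the following weaker statement holds: P(X ≤ ⌈m·p⌉) ≥ 1/2; equivalently, the median of a Binomial(m,p) distribution is at most ⌈m·p⌉. -/
open scoped ENNReal NNReal

/-!
Write `F(q) = P(Bin(m, q) ≤ c)` with `c = ⌈m p⌉`. Since `F' = -m b_{m-1,c}` for the
Bernstein polynomial `b_{m-1,c}`, `F` decreases on `[0, 1]`, so it suffices to take
`p = c / m`, and then `F(c/m) ≥ 1/2` says, after `t ↦ 1 - t`, that the Beta density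
`t^a (1-t)^c` (with `m = c + a + 1`) has at least half its mass below `p₀ = (a+1)/(a+c+1)`.
The substitutions `t = p₀ x` on `[p₀, 1]` and `t = p₀ / x` on `[p₀², p₀]` both run over
`x ∈ [1, 1/p₀]`, where the first transformed integrand is dominated by the second: on
logarithms this is a monotonicity statement, with derivative
`p₀ (2a+2+c) (x-1)² / (x (x-p₀) (1-p₀x)) ≥ 0`.
-/

open Finset Polynomial Real Set intervalIntegral

theorem hasDerivAt_log_sub_log_sub_log {a b : ℕ} {p y : ℝ} (hp : p * (a + b + 1) = a + 1)
    (hp₀ : 0 < p) (hpy : p < y) (hyp : p * y < 1) :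
    HasDerivAt (fun y => b * log (y - p) - (2 * a + 2 + b) * log y - b * log (1 - p * y))
      (p * (2 * a + 2 + b) * (y - 1) ^ 2 / (y * (y - p) * (1 - p * y))) y := by
  have hy : 0 < y := hp₀.trans hpy
  have h₁ : 0 < y - p := sub_pos.mpr hpy
  have h₂ : 0 < 1 - p * y := sub_pos.mpr hyp
  have d₁ := ((hasDerivAt_id y).sub_const p).log h₁.ne'
  have d₂ := (hasDerivAt_id y).log hy.ne'
  have d₃ := (((hasDerivAt_id y).const_mul p).const_sub 1).log h₂.ne'
  refine (((d₁.const_mul (b : ℝ)).sub (d₂.const_mul (2 * a + 2 + b : ℝ))).sub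
    (d₃.const_mul (b : ℝ))).congr_deriv ?_
  have : 1 - y * p ≠ 0 := by linarith
  simp only [id]
  field_simp
  linear_combination 2 * y * (1 - p) * hp

theorem pow_mul_one_sub_mul_pow_le {a b : ℕ} {p x : ℝ} (hp : p * (a + b + 1) = a + 1)
    (hx : 1 ≤ x) (hpx : p * x < 1) :
    x ^ (2 * a + 2 + b) * (1 - p * x) ^ b ≤ (x - p) ^ b := by
  have hp₀ : 0 < p := by
    have : (0 : ℝ) < a + b + 1 := by positivity
    nlinarith
  have hp₁ : p < 1 := by nlinarith
  set φ : ℝ → ℝ := fun y => b * log (y - p) - (2 * a + 2 + b) * log y - b * log (1 - p * y)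
  have hφ' : ∀ y ∈ Ioo p (1 / p), HasDerivAt φ _ y := fun y hy =>
    hasDerivAt_log_sub_log_sub_log hp hp₀ hy.1 ((lt_div_iff₀' hp₀).mp hy.2)
  have hmono : MonotoneOn φ (Ioo p (1 / p)) := by
    refine monotoneOn_of_deriv_nonneg (convex_Ioo _ _)
      (fun y hy => (hφ' y hy).continuousAt.continuousWithinAt)
      (fun y hy => (hφ' y (interior_subset hy)).differentiableAt.differentiableWithinAt)
      fun y hy => ?_
    rw [interior_Ioo] at hy
    rw [(hφ' y hy).deriv]
    obtain ⟨hpy, hyp⟩ := hy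
    have : 0 < 1 - p * y := sub_pos.mpr ((lt_div_iff₀' hp₀).mp hyp)
    have : 0 < y - p := sub_pos.mpr hpy
    have : 0 < y := hp₀.trans hpy
    positivity
  have hφx : φ 1 ≤ φ x := hmono ⟨hp₁, (one_lt_div hp₀).mpr hp₁⟩
    ⟨hp₁.trans_le hx, (lt_div_iff₀' hp₀).mpr hpx⟩ hx
  have hx₀ : 0 < x := by linarith
  have h₁ : 0 < 1 - p * x := by linarith
  have h₂ : 0 < x - p := by linarith
  rw [← log_le_log_iff (by positivity) (by positivity), log_mul (by positivity) (by positivity),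
    log_pow, log_pow, log_pow]
  simp only [φ, log_one, mul_one, mul_zero, sub_zero] at hφx
  push_cast
  linarith

theorem integral_div_sq_mul_comp_div {a b : ℝ} (ha : 0 < a) (hb : 0 < b) (c : ℝ)
    {f : ℝ → ℝ} (hf : Continuous f) :
    ∫ x in a..b, c / x ^ 2 * f (c / x) = ∫ t in c / b..c / a, f t := by
  have hpos : ∀ x ∈ uIcc a b, 0 < x := fun x hx => (lt_min ha hb).trans_le hx.1
  have hderiv : ∀ x ∈ uIcc a b, HasDerivAt (fun x => c / x) (-(c / x ^ 2)) x := fun x hx => by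
    simpa [div_eq_mul_inv] using (hasDerivAt_inv (hpos x hx).ne').const_mul c
  have hcont : ContinuousOn (fun x => -(c / x ^ 2)) (uIcc a b) :=
    (continuousOn_const.div (continuousOn_pow 2) fun x hx => pow_ne_zero 2 (hpos x hx).ne').neg
  rw [integral_symm (c / a) (c / b), ← integral_comp_mul_deriv hderiv hcont hf, ← integral_neg]
  congr 1 with x
  simp only [Function.comp_apply]
  ring

theorem mul_pow_mul_one_sub_pow_le {a b : ℕ} {p x : ℝ} (hp : p * (a + b + 1) = a + 1)
    (hx : 1 ≤ x) (hpx : p * x < 1) :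
    p * ((p * x) ^ a * (1 - p * x) ^ b) ≤ p / x ^ 2 * ((p / x) ^ a * (1 - p / x) ^ b) := by
  have hp₀ : 0 < p := by
    have : (0 : ℝ) < a + b + 1 := by positivity
    nlinarith
  have hx₀ : 0 < x := by linarith
  have h₁ : 0 ≤ 1 - p * x := by linarith
  have hR : p / x ^ 2 * ((p / x) ^ a * (1 - p / x) ^ b) =
      p ^ (a + 1) * (x - p) ^ b / x ^ (a + 2 + b) := by
    rw [one_sub_div hx₀.ne', div_pow, div_pow]
    field_simp
    ring
  rw [hR, le_div_iff₀ (by positivity)]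
  calc p * ((p * x) ^ a * (1 - p * x) ^ b) * x ^ (a + 2 + b)
      = p ^ (a + 1) * (x ^ (2 * a + 2 + b) * (1 - p * x) ^ b) := by ring
    _ ≤ p ^ (a + 1) * (x - p) ^ b := by gcongr; exact pow_mul_one_sub_mul_pow_le hp hx hpx

theorem integral_pow_mul_one_sub_pow_upper_le_lower (a b : ℕ) :
    ∫ t in (a + 1 : ℝ) / (a + b + 1)..1, t ^ a * (1 - t) ^ b ≤
      ∫ t in 0..(a + 1 : ℝ) / (a + b + 1), t ^ a * (1 - t) ^ b := by
  set p : ℝ := (a + 1) / (a + b + 1)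
  set H : ℝ → ℝ := fun t => t ^ a * (1 - t) ^ b
  have hp : p * (a + b + 1) = a + 1 := div_mul_cancel₀ _ (by positivity)
  have hp₀ : 0 < p := by positivity
  have hp₁ : p ≤ 1 := div_le_one_of_le₀ (by linarith) (by positivity)
  have hH : Continuous H := by fun_prop
  have hu : 1 ≤ 1 / p := one_le_one_div hp₀ hp₁
  calc ∫ t in p..1, H t = ∫ x in 1..1 / p, p * H (p * x) := by
        rw [integral_const_mul, integral_comp_mul_left _ hp₀.ne', smul_eq_mul,
          mul_inv_cancel_left₀ hp₀.ne', mul_one, mul_one_div_cancel hp₀.ne']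
    _ ≤ ∫ x in 1..1 / p, p / x ^ 2 * H (p / x) := by
        have hx₀ : ∀ x ∈ uIcc 1 (1 / p), x ≠ 0 := fun x hx =>
          (one_pos.trans_le ((le_min le_rfl hu).trans hx.1)).ne'
        refine integral_mono_on_of_le_Ioo hu
          ((continuous_const.mul (hH.comp (continuous_const_mul p))).intervalIntegrable _ _)
          (ContinuousOn.intervalIntegrable ?_)
          fun x hx => mul_pow_mul_one_sub_pow_le hp hx.1.le ((lt_div_iff₀' hp₀).mp hx.2)
        exact (continuousOn_const.div (continuousOn_pow 2) fun x hx => pow_ne_zero 2 (hx₀ x hx))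
          |>.mul (hH.comp_continuousOn (continuousOn_const.div continuousOn_id hx₀))
    _ = ∫ t in p ^ 2..p, H t := by
        rw [integral_div_sq_mul_comp_div one_pos (by positivity) p hH, div_one,
          div_div_eq_mul_div, div_one, sq]
    _ ≤ ∫ t in 0..p, H t := by
        rw [← integral_add_adjacent_intervals (hH.intervalIntegrable 0 (p ^ 2))
          (hH.intervalIntegrable _ _)]
        refine le_add_of_nonneg_left (integral_nonneg (by positivity) fun t ⟨ht₀, ht⟩ => ?_)
        have : 0 ≤ 1 - t := by linarith [pow_le_one₀ (n := 2) hp₀.le hp₁]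
        positivity

namespace bernsteinPolynomial

variable {R : Type*} [CommRing R]

theorem derivative_sum_range (n c : ℕ) :
    derivative (∑ k ∈ range (c + 1), bernsteinPolynomial R n k) =
      -(n * bernsteinPolynomial R (n - 1) c) := by
  induction c with
  | zero => simp [derivative_zero]
  | succ c ih => rw [sum_range_succ, derivative_add, ih, derivative_succ]; ring

theorem eval_nonneg (n ν : ℕ) {t : ℝ} (h₀ : 0 ≤ t) (h₁ : t ≤ 1) :
    0 ≤ (bernsteinPolynomial ℝ n ν).eval t := by
  have : 0 ≤ 1 - t := sub_nonneg.mpr h₁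
  simp only [bernsteinPolynomial, eval_mul, eval_pow, eval_sub, eval_one, eval_X, eval_natCast]
  positivity

end bernsteinPolynomial

noncomputable def binomialCDF (n c : ℕ) (q : ℝ) : ℝ :=
  (∑ k ∈ range (c + 1), bernsteinPolynomial ℝ n k).eval q

theorem binomialCDF_zero (n c : ℕ) : binomialCDF n c 0 = 1 := by
  simp [binomialCDF, eval_finsetSum, bernsteinPolynomial.eval_at_0]

theorem binomialCDF_one {n c : ℕ} (h : c < n) : binomialCDF n c 1 = 0 := by
  simp only [binomialCDF, eval_finsetSum, bernsteinPolynomial.eval_at_1]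
  exact sum_eq_zero fun k hk => if_neg (by rw [Finset.mem_range] at hk; omega)

theorem binomialCDF_sub_binomialCDF (n c : ℕ) (x y : ℝ) :
    binomialCDF n c x - binomialCDF n c y =
      n * ∫ t in x..y, (bernsteinPolynomial ℝ (n - 1) c).eval t := by
  have := integral_eq_sub_of_hasDerivAt
    (fun t _ => (∑ k ∈ range (c + 1), bernsteinPolynomial ℝ n k).hasDerivAt t)
    ((Polynomial.continuous _).intervalIntegrable x y)
  simp only [bernsteinPolynomial.derivative_sum_range, eval_neg, eval_mul, eval_natCast,
    intervalIntegral.integral_neg, intervalIntegral.integral_const_mul] at this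
  rw [binomialCDF, binomialCDF]
  linarith

theorem antitoneOn_binomialCDF (n c : ℕ) : AntitoneOn (binomialCDF n c) (Icc 0 1) := by
  intro x hx y hy hxy
  rw [← sub_nonneg, binomialCDF_sub_binomialCDF]
  refine mul_nonneg n.cast_nonneg (integral_nonneg hxy fun t ht => ?_)
  exact bernsteinPolynomial.eval_nonneg _ _ (hx.1.trans ht.1) (ht.2.trans hy.2)

theorem half_le_binomialCDF_div {n c : ℕ} (h : c < n) : 1 / 2 ≤ binomialCDF n c (c / n) := by
  obtain ⟨a, rfl⟩ : ∃ a, n = c + a + 1 := ⟨n - c - 1, by omega⟩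
  set μ : ℝ := c / (c + a + 1 : ℕ)
  have hμ : 1 - μ = (a + 1) / (a + c + 1) := by
    simp only [μ]; field_simp; push_cast; ring
  have hB : ∀ t : ℝ, (bernsteinPolynomial ℝ (c + a + 1 - 1) c).eval t =
      (c + a).choose c * ((1 - t) ^ a * (1 - (1 - t)) ^ c) := fun t => by
    simp [bernsteinPolynomial]; ring
  have hlower := binomialCDF_sub_binomialCDF (c + a + 1) c 0 μ
  have hupper := binomialCDF_sub_binomialCDF (c + a + 1) c μ 1
  simp only [hB, integral_const_mul, integral_comp_sub_left (fun s => s ^ a * (1 - s) ^ c),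
    sub_zero, sub_self, hμ] at hlower hupper
  rw [binomialCDF_zero] at hlower
  rw [binomialCDF_one h, sub_zero] at hupper
  have := mul_le_mul_of_nonneg_left (mul_le_mul_of_nonneg_left
    (integral_pow_mul_one_sub_pow_upper_le_lower a c) ((c + a).choose c).cast_nonneg)
    (c + a + 1).cast_nonneg
  linarith

theorem PMF.binomial_apply_eq_ofReal_eval (p : ℝ≥0) (h : p ≤ 1) (m : ℕ) (k : Fin (m + 1)) :
    PMF.binomial p h m k = ENNReal.ofReal ((bernsteinPolynomial ℝ m k).eval (p : ℝ)) := by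
  rw [PMF.binomial, PMF.ofFintype_apply, ← ENNReal.ofReal_coe_nnreal]
  congr 1
  simp [bernsteinPolynomial, NNReal.coe_sub h]
  ring

theorem PMF.sum_binomial_le_eq_ofReal_binomialCDF (p : ℝ≥0) (h : p ≤ 1) {m c : ℕ}
    (hc : c ≤ m) :
    ∑ k ∈ univ.filter (fun k : Fin (m + 1) => (k : ℕ) ≤ c), PMF.binomial p h m k =
      ENNReal.ofReal (binomialCDF m c p) := by
  have hrange : (range (m + 1)).filter (· ≤ c) = range (c + 1) := by
    ext j; simp only [mem_filter, Finset.mem_range]; omega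
  simp_rw [binomialCDF, eval_finsetSum, PMF.binomial_apply_eq_ofReal_eval]
  rw [sum_filter, Fin.sum_univ_eq_sum_range (fun j => if j ≤ c then
      ENNReal.ofReal ((bernsteinPolynomial ℝ m j).eval (p : ℝ)) else 0), ← sum_filter, hrange]
  exact (ENNReal.ofReal_sum_of_nonneg fun k _ =>
    bernsteinPolynomial.eval_nonneg _ _ p.2 h).symm

/-- The median of a `Binomial(m, p)` distribution is at most `⌈m * p⌉`:
`P(X ≤ ⌈m * p⌉) ≥ 1/2`. -/
theorem binomial_median_le_ceil (m : ℕ) (p : ℝ≥0) (hp : (p : ℝ≥0∞) ≤ 1) :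
    (1 : ℝ≥0∞) / 2 ≤
      ∑ k ∈ Finset.univ.filter (fun k : Fin (m + 1) => (k : ℕ) ≤ ⌈(m : ℝ≥0) * p⌉₊),
        PMF.binomial p (ENNReal.coe_le_one_iff.mp hp) m k := by
  set c := ⌈(m : ℝ≥0) * p⌉₊
  have hp₁ : p ≤ 1 := ENNReal.coe_le_one_iff.mp hp
  rcases le_or_gt m c with hmc | hcm
  · have htotal := (PMF.binomial p hp₁ m).tsum_coe
    rw [tsum_fintype] at htotal
    rw [filter_true_of_mem fun k _ => k.is_le.trans hmc, htotal]
    exact ENNReal.half_le_self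
  have hpc : (p : ℝ) ≤ c / m := by
    rw [le_div_iff₀' (by exact_mod_cast (Nat.zero_le c).trans_lt hcm)]
    exact_mod_cast Nat.le_ceil ((m : ℝ≥0) * p)
  rw [PMF.sum_binomial_le_eq_ofReal_binomialCDF p hp₁ hcm.le, ← ENNReal.ofReal_one,
    ← ENNReal.ofReal_ofNat, ← ENNReal.ofReal_div_of_pos two_pos]
  refine ENNReal.ofReal_le_ofReal ((half_le_binomialCDF_div hcm).trans
    (antitoneOn_binomialCDF m c ⟨p.2, hp₁⟩ ⟨by positivity, ?_⟩ hpc))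
  exact div_le_one_of_le₀ (by exact_mod_cast hcm.le) (by positivity)
end

section
/- During a graph search that explores at most s' nodes and, each time a path-suffix of length less than s' is encountered, adds that suffix (of length < s') to the explored set, the explored set never exceeds 2s' nodes; consequently no path of initial length at least 4s' is ever reduced below 2s'. -/
theorem le_add_of_step_le_add_of_stop {α : Type*} [AddCommMonoid α] [LinearOrder α]
    [IsOrderedAddMonoid α] {s a : α} {e : ℕ → α} (h0 : e 0 ≤ s + a)
    (hstep : ∀ t, e t < s → e (t + 1) ≤ e t + a)
    (hstop : ∀ t, s ≤ e t → e (t + 1) = e t) (t : ℕ) : e t ≤ s + a := by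
  induction t with
  | zero => exact h0
  | succ n ih =>
    rcases lt_or_ge (e n) s with hlt | hge
    · exact (hstep n hlt).trans (add_le_add hlt.le le_rfl)
    · exact (hstop n hge).trans_le ih

/-- Invariant of the graph-search loop: the explored set starts empty, grows
(while its size is below `s'`) by one node plus possibly a path suffix of fewer
than `s'` nodes per iteration, and stays fixed once its size reaches `s'`.
Then the explored set never exceeds `2 s'` nodes, and consequently a path of
initial length at least `4 s'` is never reduced below `2 s'`. -/
theorem graph_search_invariant (s' : ℕ) (e : ℕ → ℕ) (h0 : e 0 = 0)
    (hstep : ∀ t, e t < s' → e (t + 1) ≤ e t + s')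
    (hstop : ∀ t, s' ≤ e t → e (t + 1) = e t) :
    (∀ t, e t ≤ 2 * s') ∧ (∀ p t : ℕ, 4 * s' ≤ p → 2 * s' ≤ p - e t) := by
  have hbound : ∀ t, e t ≤ 2 * s' := fun t => two_mul s' ▸
    le_add_of_step_le_add_of_stop (by omega) hstep hstop t
  exact ⟨hbound, fun p t hp => by have := hbound t; omega⟩
end

section
/- If every stitch between consecutive paths in a sequence shortens the earlier path's suffix by at most s'' and the later path's prefix by at most s'', and each of the r paths has length exactly s', then the stitched path has length at least r·(s' − 2s''); moreover, each individual hospital owning q of the r paths retains at least q·(s' − 2s'') of its nodes on the stitched path. -/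
open Finset

theorem stitched_length_bound_general (r s' s'' : ℕ)
    (loss₁ loss₂ : Fin r → ℕ)
    (h1 : ∀ t, loss₁ t ≤ s'') (h2 : ∀ t, loss₂ t ≤ s'') :
    r * (s' - 2 * s'') ≤ ∑ t : Fin r, (s' - loss₁ t - loss₂ t) ∧
    ∀ S : Finset (Fin r),
      S.card * (s' - 2 * s'') ≤ ∑ t ∈ S, (s' - loss₁ t - loss₂ t) := by
  have retained (S : Finset (Fin r)) :
      S.card * (s' - 2 * s'') ≤ ∑ t ∈ S, (s' - loss₁ t - loss₂ t) :=
    S.card_nsmul_le_sum _ _ fun t _ => by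
      have := h1 t
      have := h2 t
      omega
  exact ⟨by simpa using retained univ, retained⟩

/-- If stitching a sequence of `r` paths, each of length exactly `s'`, removes
at most `s''` nodes from the end and at most `s''` nodes from the start of each
path (`2 s'' < s'`), then the stitched path has length at least `r (s' − 2 s'')`,
and a hospital owning any subset of `q` of the paths retains at least
`q (s' − 2 s'')` of its nodes. -/
theorem stitched_length_bound (r s' s'' : ℕ) (hss : 2 * s'' < s')
    (loss₁ loss₂ : Fin r → ℕ)
    (h1 : ∀ t, loss₁ t ≤ s'') (h2 : ∀ t, loss₂ t ≤ s'') :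
    r * (s' - 2 * s'') ≤ ∑ t : Fin r, (s' - loss₁ t - loss₂ t) ∧
    ∀ S : Finset (Fin r),
      S.card * (s' - 2 * s'') ≤ ∑ t ∈ S, (s' - loss₁ t - loss₂ t) :=
  stitched_length_bound_general r s' s'' loss₁ loss₂ h1 h2
end
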